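/- arXiv:2404.01018 — 4 statements merged into one kernel-verified Lean document; each statement's English description precedes it below -/
import Mathlib

section
/- For any n×m processing-time matrices P and P', if P' = P + b·E where b ∈ ℝ and E is the n×m all-ones matrix, then for every permutation π of {1,...,n}, the makespan satisfies f_{P'}(π) = f_P(π) + (m + n − 1)·b. -/
/-- Completion times of the permutation flowshop recursion (0-indexed). -/
noncomputable def pfspC (p : ℕ → ℕ → ℝ) : ℕ → ℕ → ℝ
  | 0, 0 => p 0 0
  | i+1, 0 => pfspC p i 0 + p (i+1) 0
  | 0, j+1 => pfspC p 0 j + p 0 (j+1)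
  | i+1, j+1 => max (pfspC p i (j+1)) (pfspC p (i+1) j) + p (i+1) (j+1)

/-- Makespan of the PFSP with processing-time matrix `P` under permutation `π`. -/
noncomputable def makespan (n m : ℕ) (P : Fin n → Fin m → ℝ) (π : Equiv.Perm (Fin n)) : ℝ :=
  pfspC (fun i j => if h : i < n ∧ j < m then P (π ⟨i, h.1⟩) ⟨j, h.2⟩ else 0) (n - 1) (m - 1)

/-- Both arguments of every `max` in the recursion are delayed by the same amount, because every
monotone lattice path from `(0, 0)` to `(i, j)` visits `i + j + 1` cells. -/
theorem pfspC_add_const (p q : ℕ → ℕ → ℝ) (b : ℝ) (i j : ℕ)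
    (hq : ∀ i' ≤ i, ∀ j' ≤ j, q i' j' = p i' j' + b) :
    pfspC q i j = pfspC p i j + ((i : ℝ) + j + 1) * b := by
  induction i, j using pfspC.induct with
  | case1 => simp [pfspC, hq 0 le_rfl 0 le_rfl]
  | case2 i ih =>
    rw [pfspC, pfspC, ih fun i' hi' j' hj' => hq i' (by omega) j' hj', hq (i + 1) le_rfl 0 le_rfl]
    push_cast; ring
  | case3 j ih =>
    rw [pfspC, pfspC, ih fun i' hi' j' hj' => hq i' hi' j' (by omega), hq 0 le_rfl (j + 1) le_rfl]
    push_cast; ring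
  | case4 i j ihi ihj =>
    rw [pfspC, pfspC, ihi fun i' hi' j' hj' => hq i' (by omega) j' hj',
      ihj fun i' hi' j' hj' => hq i' hi' j' (by omega), hq (i + 1) le_rfl (j + 1) le_rfl]
    push_cast
    rw [show ((i : ℝ) + (j + 1) + 1) * b = (i + 1 + j + 1) * b by ring, max_add_add_right]
    ring

/-- Theorem 2 (shift-invariance): if `P' = P + b·E` (E the all-ones matrix) then
`f_{P'}(π) = f_P(π) + (m + n - 1)·b` for every permutation `π`. -/
theorem makespan_shift (n m : ℕ) (hn : 0 < n) (hm : 0 < m)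
    (P P' : Fin n → Fin m → ℝ) (b : ℝ)
    (hP' : ∀ i j, P' i j = P i j + b) (π : Equiv.Perm (Fin n)) :
    makespan n m P' π = makespan n m P π + ((m : ℝ) + (n : ℝ) - 1) * b := by
  rw [makespan, makespan, pfspC_add_const _ _ b, Nat.cast_pred hn, Nat.cast_pred hm]
  · ring
  · intro i hi j hj
    simp [show i < n by omega, show j < m by omega, hP']
end

section
/- If P' = t·P + b·E with t > 0 and b ∈ ℝ, then the PFSP makespan functions f_P and f_{P'} are order-isomorphic: for all permutations π, π' of {1,...,n}, f_P(π) ≤ f_P(π') if and only if f_{P'}(π) ≤ f_{P'}(π'). -/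
lemma pfspC_affine (p q : ℕ → ℕ → ℝ) (t b : ℝ) (ht : 0 ≤ t) :
    ∀ i j, (∀ i' j', i' ≤ i → j' ≤ j → q i' j' = t * p i' j' + b) →
      pfspC q i j = t * pfspC p i j + ((i : ℝ) + j + 1) * b := by
  intro i
  induction i with
  | zero =>
    intro j
    induction j with
    | zero =>
      intro h
      simp only [pfspC, h 0 0 le_rfl le_rfl]
      push_cast
      ring
    | succ j ihj =>
      intro h
      have h' : ∀ i' j', i' ≤ 0 → j' ≤ j → q i' j' = t * p i' j' + b :=
        fun i' j' hi hj => h i' j' hi (hj.trans (Nat.le_succ j))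
      simp only [pfspC, ihj h', h 0 (j+1) le_rfl le_rfl]
      push_cast
      ring
  | succ i ihi =>
    intro j
    induction j with
    | zero =>
      intro h
      have h' : ∀ i' j', i' ≤ i → j' ≤ 0 → q i' j' = t * p i' j' + b :=
        fun i' j' hi hj => h i' j' (hi.trans (Nat.le_succ i)) hj
      simp only [pfspC, ihi 0 h', h (i+1) 0 le_rfl le_rfl]
      push_cast
      ring
    | succ j ihj =>
      intro h
      have h1 : ∀ i' j', i' ≤ i → j' ≤ j + 1 → q i' j' = t * p i' j' + b :=
        fun i' j' hi hj => h i' j' (hi.trans (Nat.le_succ i)) hj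
      have h2 : ∀ i' j', i' ≤ i + 1 → j' ≤ j → q i' j' = t * p i' j' + b :=
        fun i' j' hi hj => h i' j' hi (hj.trans (Nat.le_succ j))
      have e1 := ihi (j+1) h1
      have e2 := ihj h2
      simp only [pfspC, e1, e2, h (i+1) (j+1) le_rfl le_rfl]
      have key : max (t * pfspC p i (j+1) + ((i:ℝ) + (j+1) + 1) * b)
          (t * pfspC p (i+1) j + (((i:ℝ)+1) + j + 1) * b)
          = t * max (pfspC p i (j+1)) (pfspC p (i+1) j) + ((i:ℝ) + j + 2) * b := by
        have hc1 : ((i:ℝ) + ((j:ℝ)+1) + 1) = (i:ℝ) + j + 2 := by ring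
        have hc2 : (((i:ℝ)+1) + j + 1) = (i:ℝ) + j + 2 := by ring
        rw [hc1, hc2, mul_max_of_nonneg _ _ ht, max_add_add_right]
      push_cast
      push_cast at key
      rw [key]
      ring

/-- If `P' = t·P + b·E` with `t > 0`, then the makespan functions `f_P` and `f_{P'}`
are order-isomorphic. -/
theorem makespan_order_isomorphic (n m : ℕ) (hn : 0 < n) (hm : 0 < m)
    (P P' : Fin n → Fin m → ℝ) (t b : ℝ) (ht : 0 < t)
    (hP' : ∀ i j, P' i j = t * P i j + b) :
    ∀ π π' : Equiv.Perm (Fin n),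
      makespan n m P π ≤ makespan n m P π' ↔ makespan n m P' π ≤ makespan n m P' π' := by
  have key : ∀ π : Equiv.Perm (Fin n),
      makespan n m P' π = t * makespan n m P π + (((n-1 : ℕ) : ℝ) + ((m-1 : ℕ) : ℝ) + 1) * b := by
    intro π
    apply pfspC_affine _ _ t b ht.le
    intro i' j' hi hj
    have hi' : i' < n := lt_of_le_of_lt hi (Nat.sub_lt hn one_pos)
    have hj' : j' < m := lt_of_le_of_lt hj (Nat.sub_lt hm one_pos)
    simp [hi', hj', hP']
  intro π π'
  rw [key π, key π', add_le_add_iff_right, mul_le_mul_iff_right₀ ht]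
end

section
/- With P, Q, S, g, and the centered matrices P*, Q* as above, ∑_{i=1}^n ∑_{j=1}^m p*_{i,j} q*_{i,j} ≥ (1/2)·(‖Q‖_F² − (g/n)·‖P‖_F²). -/
/-!
The centering identity `⟨P*, Q*⟩ = ⟨P, Q⟩ − A(P)·A(Q)/(nm)` together with `⟨P, Q⟩ = ‖Q‖²`
reduces the claim to the sum-product inequality `2·A(P)·A(Q) ≤ gm‖P‖² + nm‖Q‖²`. Writing
`A(P)·A(Q)` as a sum of `P_x P_y` over all entries `x` of `P` and all entries `y` of the `g` kept
rows, this follows by bounding every term with `2ab ≤ a² + b²`.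
-/

/-- Sum of all entries of an `n × m` real matrix. -/
noncomputable def entSum (n m : ℕ) (P : Fin n → Fin m → ℝ) : ℝ := ∑ i, ∑ j, P i j

/-- The centered matrix `P* = P − (A(P)/(nm))·E`, `E` the all-ones matrix. -/
noncomputable def star (n m : ℕ) (P : Fin n → Fin m → ℝ) : Fin n → Fin m → ℝ :=
  fun i j => P i j - entSum n m P / ((n : ℝ) * m)

/-- The zero-padded matrix keeping only the rows of `P` indexed by `S`. -/
noncomputable def rowRestrict (n m : ℕ) (P : Fin n → Fin m → ℝ) (S : Finset (Fin n)) :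
    Fin n → Fin m → ℝ :=
  fun i j => if i ∈ S then P i j else 0

open Finset

theorem two_mul_sum_mul_sum_le {ι κ R : Type*} [CommRing R] [LinearOrder R]
    [IsStrictOrderedRing R] (s : Finset ι) (t : Finset κ) (f : ι → R) (h : κ → R) :
    2 * ((∑ i ∈ s, f i) * ∑ k ∈ t, h k) ≤
      #t * ∑ i ∈ s, f i ^ 2 + #s * ∑ k ∈ t, h k ^ 2 := by
  calc 2 * ((∑ i ∈ s, f i) * ∑ k ∈ t, h k)
      = ∑ i ∈ s, ∑ k ∈ t, 2 * f i * h k := by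
        rw [sum_mul_sum, mul_sum]
        simp only [mul_sum, mul_assoc]
    _ ≤ ∑ i ∈ s, ∑ k ∈ t, (f i ^ 2 + h k ^ 2) :=
        sum_le_sum fun i _ => sum_le_sum fun k _ => two_mul_le_add_sq (f i) (h k)
    _ = #t * ∑ i ∈ s, f i ^ 2 + #s * ∑ k ∈ t, h k ^ 2 := by
        simp only [sum_add_distrib, sum_const, nsmul_eq_mul, ← mul_sum, sum_comm (s := s)]

section Matrix

variable {n m : ℕ}

theorem sum_sum_rowRestrict (P : Fin n → Fin m → ℝ) (S : Finset (Fin n))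
    (F : Fin n → Fin m → ℝ → ℝ) (hF : ∀ i j, F i j 0 = 0) :
    ∑ i, ∑ j, F i j (rowRestrict n m P S i j) = ∑ i ∈ S, ∑ j, F i j (P i j) := by
  rw [← Fintype.sum_ite_mem S]
  refine sum_congr rfl fun i _ => ?_
  by_cases hi : i ∈ S <;> simp [rowRestrict, hi, hF]

theorem sum_sum_star_mul_star (P Q : Fin n → Fin m → ℝ) (hn : 0 < n) (hm : 0 < m) :
    ∑ i, ∑ j, star n m P i j * star n m Q i j =
      ∑ i, ∑ j, P i j * Q i j - entSum n m P * entSum n m Q / (n * m) := by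
  have hnm : (n : ℝ) * m ≠ 0 := by positivity
  simp only [_root_.star, entSum, sub_mul, mul_sub, sum_sub_distrib, ← sum_mul, ← mul_sum,
    sum_const, card_univ, Fintype.card_fin, nsmul_eq_mul]
  field_simp
  ring

theorem two_mul_entSum_mul_entSum_rowRestrict_le (P : Fin n → Fin m → ℝ)
    (S : Finset (Fin n)) :
    2 * (entSum n m P * entSum n m (rowRestrict n m P S)) ≤
      #S * m * ∑ i, ∑ j, P i j ^ 2 + n * m * ∑ i, ∑ j, rowRestrict n m P S i j ^ 2 := by
  have key := two_mul_sum_mul_sum_le (univ ×ˢ univ) (S ×ˢ univ)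
    (fun x : Fin n × Fin m => P x.1 x.2) (fun x => P x.1 x.2)
  simp only [sum_product, card_product, card_univ, Fintype.card_fin, Nat.cast_mul] at key
  rwa [entSum, entSum, sum_sum_rowRestrict P S (fun _ _ x => x) (fun _ _ => rfl),
    sum_sum_rowRestrict P S (fun _ _ x => x ^ 2) (fun _ _ => by simp)]

end Matrix

/-- Theorem 3: `⟨P*, Q*⟩_F ≥ (1/2)·(‖Q‖_F² − (g/n)·‖P‖_F²)` where `Q` keeps the rows
of `P` indexed by `S` (with `|S| = g`) and zeroes the others. -/
theorem inner_star_ge (n m : ℕ) (hn : 0 < n) (hm : 0 < m) (P : Fin n → Fin m → ℝ)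
    (S : Finset (Fin n)) (g : ℕ) (hg : S.card = g) :
    (1 / 2) * ((∑ i, ∑ j, (rowRestrict n m P S i j) ^ 2) -
        ((g : ℝ) / n) * ∑ i, ∑ j, (P i j) ^ 2) ≤
      ∑ i, ∑ j, star n m P i j * star n m (rowRestrict n m P S) i j := by
  set Q := rowRestrict n m P S
  have hPQ : ∑ i, ∑ j, P i j * Q i j = ∑ i, ∑ j, Q i j ^ 2 := by
    rw [sum_sum_rowRestrict P S (fun i j x => P i j * x) (fun _ _ => mul_zero _),
      sum_sum_rowRestrict P S (fun _ _ x => x ^ 2) (fun _ _ => by simp)]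
    simp only [sq]
  have hsp := two_mul_entSum_mul_entSum_rowRestrict_le P S
  rw [hg] at hsp
  rw [sum_sum_star_mul_star P Q hn hm, hPQ]
  calc (1 / 2) * ((∑ i, ∑ j, Q i j ^ 2) - ((g : ℝ) / n) * ∑ i, ∑ j, P i j ^ 2)
      = ∑ i, ∑ j, Q i j ^ 2 -
          (g * m * ∑ i, ∑ j, P i j ^ 2 + n * m * ∑ i, ∑ j, Q i j ^ 2) / (2 * (n * m)) := by
        field_simp
        ring
    _ ≤ ∑ i, ∑ j, Q i j ^ 2 - 2 * (entSum n m P * entSum n m Q) / (2 * (n * m)) := by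
        gcongr
    _ = ∑ i, ∑ j, Q i j ^ 2 - entSum n m P * entSum n m Q / (n * m) := by
        rw [mul_div_mul_left _ _ two_ne_zero]
end

section
/- Let P be an n×m matrix with entries p_{i,j} ≥ 1, S ⊆ {1,...,n} nonempty, and Q the matrix keeping rows of P in S and zeroing the others. With P* and Q* the centered matrices (subtracting the mean of all nm entries times the all-ones matrix), we have ‖P*‖_F · ‖Q*‖_F ≤ (1 − 1/(nm))·‖P‖_F². -/
lemma star_sq_sum (n m : ℕ) (hn : 0 < n) (hm : 0 < m) (M : Fin n → Fin m → ℝ) :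
    ∑ i, ∑ j, (star n m M i j) ^ 2
      = (∑ i, ∑ j, (M i j) ^ 2) - (entSum n m M) ^ 2 / ((n : ℝ) * m) := by
  have hnm : ((n : ℝ) * m) ≠ 0 := by positivity
  set c : ℝ := entSum n m M / ((n : ℝ) * m) with hc
  have expand : ∀ i j, (star n m M i j) ^ 2 = (M i j) ^ 2 - 2 * c * M i j + c ^ 2 := by
    intro i j
    have : star n m M i j = M i j - c := rfl
    rw [this]; ring
  simp only [expand, Finset.sum_add_distrib, Finset.sum_sub_distrib, Finset.sum_const,
    Finset.card_univ, Fintype.card_fin, nsmul_eq_mul, ← Finset.mul_sum]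
  have hA : ∑ i, ∑ j, M i j = entSum n m M := rfl
  rw [hA]
  have : entSum n m M = c * ((n : ℝ) * m) := by
    rw [hc]; field_simp
  rw [this]
  field_simp
  ring

lemma sq_sum_ge (n m : ℕ) (M : Fin n → Fin m → ℝ) (h0 : ∀ i j, 0 ≤ M i j) :
    ∑ i, ∑ j, (M i j) ^ 2 ≤ (entSum n m M) ^ 2 := by
  have hA : ∀ i j, M i j ≤ entSum n m M := by
    intro i j
    calc M i j ≤ ∑ j', M i j' := Finset.single_le_sum (fun j' _ => h0 i j') (Finset.mem_univ j)
    _ ≤ entSum n m M := Finset.single_le_sum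
        (fun i' _ => Finset.sum_nonneg fun j' _ => h0 i' j') (Finset.mem_univ i)
  have : (entSum n m M) ^ 2 = ∑ i, ∑ j, M i j * entSum n m M := by
    simp [entSum, pow_two, Finset.sum_mul]
  rw [this]
  refine Finset.sum_le_sum fun i _ => Finset.sum_le_sum fun j _ => ?_
  rw [pow_two]
  exact mul_le_mul_of_nonneg_left (hA i j) (h0 i j)

lemma star_sq_le (n m : ℕ) (hn : 0 < n) (hm : 0 < m) (M : Fin n → Fin m → ℝ)
    (h0 : ∀ i j, 0 ≤ M i j) :
    ∑ i, ∑ j, (star n m M i j) ^ 2 ≤ (1 - 1 / ((n : ℝ) * m)) * ∑ i, ∑ j, (M i j) ^ 2 := by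
  rw [star_sq_sum n m hn hm M]
  have hnm : (0 : ℝ) < (n : ℝ) * m := by positivity
  have h := sq_sum_ge n m M h0
  have hd : (∑ i, ∑ j, (M i j) ^ 2) / ((n : ℝ) * m) ≤ (entSum n m M) ^ 2 / ((n : ℝ) * m) := by
    gcongr
  have hr : (1 - 1 / ((n : ℝ) * m)) * (∑ i, ∑ j, (M i j) ^ 2)
      = (∑ i, ∑ j, (M i j) ^ 2) - (∑ i, ∑ j, (M i j) ^ 2) / ((n : ℝ) * m) := by
    field_simp
  rw [hr]
  linarith

/-- Theorem 4: for `P` with entries ≥ 1 and `Q` the row-restriction of `P` to a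
nonempty `S` (other rows zeroed), `‖P*‖_F · ‖Q*‖_F ≤ (1 − 1/(nm))·‖P‖_F²`. -/
theorem star_norm_mul_le (n m : ℕ) (hn : 0 < n) (hm : 0 < m) (P : Fin n → Fin m → ℝ)
    (hP : ∀ i j, 1 ≤ P i j) (S : Finset (Fin n)) (hS : S.Nonempty) :
    Real.sqrt (∑ i, ∑ j, (star n m P i j) ^ 2) *
        Real.sqrt (∑ i, ∑ j, (star n m (rowRestrict n m P S) i j) ^ 2) ≤
      (1 - 1 / ((n : ℝ) * m)) * ∑ i, ∑ j, (P i j) ^ 2 := by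
  have hnm : (0 : ℝ) < (n : ℝ) * m := by positivity
  have hK : (0 : ℝ) ≤ 1 - 1 / ((n : ℝ) * m) := by
    have : (1 : ℝ) ≤ (n : ℝ) * m := by
      have h1 : (1 : ℝ) ≤ (n : ℝ) := by exact_mod_cast hn
      have h2 : (1 : ℝ) ≤ (m : ℝ) := by exact_mod_cast hm
      nlinarith
    have := div_le_one_of_le₀ (le_refl ((n:ℝ)*m)) (le_of_lt hnm)
    rw [sub_nonneg]
    rw [div_le_one hnm]
    linarith
  set K := 1 - 1 / ((n : ℝ) * m) with hKdef
  set PS := ∑ i, ∑ j, (P i j) ^ 2 with hPS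
  have hPS0 : 0 ≤ PS := Finset.sum_nonneg fun i _ => Finset.sum_nonneg fun j _ => sq_nonneg _
  have h1 : ∑ i, ∑ j, (star n m P i j) ^ 2 ≤ K * PS :=
    star_sq_le n m hn hm P (fun i j => le_trans zero_le_one (hP i j))
  have h2 : ∑ i, ∑ j, (star n m (rowRestrict n m P S) i j) ^ 2 ≤ K * PS := by
    refine le_trans (star_sq_le n m hn hm _ ?_) ?_
    · intro i j; simp only [rowRestrict]; split
      · exact le_trans zero_le_one (hP i j)
      · exact le_refl 0
    · refine mul_le_mul_of_nonneg_left ?_ hK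
      refine Finset.sum_le_sum fun i _ => Finset.sum_le_sum fun j _ => ?_
      simp only [rowRestrict]; split
      · exact le_refl _
      · simpa using sq_nonneg (P i j)
  calc Real.sqrt (∑ i, ∑ j, (star n m P i j) ^ 2) *
        Real.sqrt (∑ i, ∑ j, (star n m (rowRestrict n m P S) i j) ^ 2)
      ≤ Real.sqrt (K * PS) * Real.sqrt (K * PS) :=
        mul_le_mul (Real.sqrt_le_sqrt h1) (Real.sqrt_le_sqrt h2)
          (Real.sqrt_nonneg _) (Real.sqrt_nonneg _)
    _ = K * PS := Real.mul_self_sqrt (by positivity)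
end
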